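/- arXiv:1808.10320 — 2 statements merged into one kernel-verified Lean document; each statement's English description precedes it below -/
import Mathlib

section
/- Let T be a theory. Then there is a basic theory T_b such that for every graded implication Φ: T ⊢ Φ in LAE if and only if T_b ⊢ Φ in LAE. -/
/-- Boolean (propositional) formulas over countably many variables. -/
inductive BForm : Type
  | var : ℕ → BForm
  | bot : BForm
  | top : BForm
  | and : BForm → BForm → BForm
  | or : BForm → BForm → BForm
  | not : BForm → BForm

/-- Classical truth-value evaluation of a Boolean formula. -/
def BForm.eval (v : ℕ → Bool) : BForm → Bool
  | .var n => v n
  | .bot => false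
  | .top => true
  | .and a b => a.eval v && b.eval v
  | .or a b => a.eval v || b.eval v
  | .not a => !(a.eval v)

/-- The abbreviation `a → b`. -/
def BForm.imp (a b : BForm) : BForm := .or (.not a) b

/-- A formula is a CPL tautology if it is true under every assignment. -/
def BForm.Taut (a : BForm) : Prop := ∀ v : ℕ → Bool, a.eval v = true

/-- A graded implication `α ⟹_d β` with degree `d ∈ ℝ⁺ = [0,∞)`. -/
structure GradedImp : Type where
  lhs : BForm
  deg : NNReal
  rhs : BForm

/-- Derivability in the calculus LAE from a theory `T`. -/
inductive Derives (T : Set GradedImp) : GradedImp → Prop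
  | ax {Φ : GradedImp} : Φ ∈ T → Derives T Φ
  | r1 (α β : BForm) : (α.imp β).Taut → Derives T ⟨α, 0, β⟩
  | r2 {α β : BForm} (γ : BForm) :
      Derives T ⟨α, 0, β⟩ → Derives T ⟨α.and γ, 0, β.and γ⟩
  | r3 {α β : BForm} {c : NNReal} (d : NNReal) :
      c ≤ d → Derives T ⟨α, c, β⟩ → Derives T ⟨α, d, β⟩
  | r4 {α : BForm} {c : NNReal} :
      Derives T ⟨α, c, .bot⟩ → Derives T ⟨α, 0, .bot⟩
  | r5 {α β γ : BForm} {c : NNReal} :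
      Derives T ⟨α, c, γ⟩ → Derives T ⟨β, c, γ⟩ → Derives T ⟨α.or β, c, γ⟩
  | r6 {α β γ : BForm} {c d : NNReal} :
      Derives T ⟨α, c, β⟩ → Derives T ⟨β, d, γ⟩ → Derives T ⟨α, c + d, γ⟩

/-- A literal: a variable index together with a polarity (`true` = positive). -/
abbrev Lit : Type := ℕ × Bool

/-- The formula corresponding to a literal. -/
def litForm : Lit → BForm
  | (n, true) => .var n
  | (n, false) => .not (.var n)

/-- The conjunction `λ₁ ∧ … ∧ λₙ` of a nonempty list of literals. -/
def conjLits : Lit → List Lit → BForm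
  | l, [] => litForm l
  | l, m :: rest => (litForm l).and (conjLits m rest)

/-- The disjunction of a list of formulas, the empty disjunction being `⊥`. -/
def disjForms : List BForm → BForm
  | [] => .bot
  | [a] => a
  | a :: b :: rest => a.or (disjForms (b :: rest))

/-- A list of literals is consistent if it contains no variable together with its negation. -/
def ConsistentList (l : List Lit) : Prop :=
  ∀ n : ℕ, ¬((n, true) ∈ l ∧ (n, false) ∈ l)

/-- A basic implication: `λ₁ ∧ … ∧ λₙ ⟹_d ⋁ᵢ ⋀ⱼ μᵢⱼ` with `n ≥ 1`, `l ≥ 0`,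
each `kᵢ ≥ 1`, and all clauses consistent. -/
def IsBasic (Φ : GradedImp) : Prop :=
  ∃ (lam : Lit) (lams : List Lit) (cls : List (Lit × List Lit)),
    ConsistentList (lam :: lams) ∧
    (∀ c ∈ cls, ConsistentList (c.1 :: c.2)) ∧
    Φ.lhs = conjLits lam lams ∧
    Φ.rhs = disjForms (cls.map fun c => conjLits c.1 c.2)

/-!
Every formula is equivalent to its disjunctive normal form over its own variables. Replace
each axiom `α ⟹_d β` of `T` by the implications `m ⟹_d dnf β`, one for each minterm `m` of
`dnf α`; these are basic. Each new axiom follows from the old one by R1 and R6, and each old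
axiom is recovered by R5 over the minterms of `α` and then R1 and R6 on both sides. Two
theories that derive each other's axioms derive the same graded implications.
-/

namespace BForm

def vars : BForm → List ℕ
  | .var n => [n]
  | .bot | .top => []
  | .and a b | .or a b => a.vars ++ b.vars
  | .not a => a.vars

theorem eval_congr (a : BForm) {v w : ℕ → Bool} (h : ∀ n ∈ a.vars, v n = w n) :
    a.eval v = a.eval w := by
  induction a with
  | var n => exact h n (by simp [vars])
  | bot | top => rfl
  | and a b iha ihb | or a b iha ihb =>
    simp only [eval]
    rw [iha fun n hn => h n (by simp [vars, hn]), ihb fun n hn => h n (by simp [vars, hn])]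
  | not a ih => simp only [eval, ih fun n hn => h n (by simpa [vars] using hn)]

theorem imp_taut_of_forall {a b : BForm} (h : ∀ v, a.eval v = true → b.eval v = true) :
    (a.imp b).Taut := by
  intro v
  cases ha : a.eval v <;> simp [imp, eval, ha, h v]

end BForm

theorem eval_litForm (p : Lit) (v : ℕ → Bool) : (litForm p).eval v = true ↔ v p.1 = p.2 := by
  rcases p with ⟨n, _ | _⟩ <;> simp [litForm, BForm.eval]

theorem eval_conjLits (v : ℕ → Bool) :
    ∀ (l : Lit) (ls : List Lit), (conjLits l ls).eval v = true ↔ ∀ p ∈ l :: ls, v p.1 = p.2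
  | l, [] => by simp [conjLits, eval_litForm]
  | l, m :: rest => by simp [conjLits, BForm.eval, eval_litForm, eval_conjLits v m rest]

theorem eval_disjForms (v : ℕ → Bool) :
    ∀ xs : List BForm, (disjForms xs).eval v = true ↔ ∃ a ∈ xs, a.eval v = true
  | [] => by simp [disjForms, BForm.eval]
  | [a] => by simp [disjForms]
  | a :: b :: rest => by simp [disjForms, BForm.eval, eval_disjForms v (b :: rest)]

theorem consistentList_map_graph (w : ℕ → Bool) (L : List ℕ) :
    ConsistentList (L.map fun n => (n, w n)) := by
  rintro n ⟨hpos, hneg⟩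
  simp only [List.mem_map, Prod.mk.injEq] at hpos hneg
  obtain ⟨_, -, rfl, hpos⟩ := hpos
  obtain ⟨_, -, rfl, hneg⟩ := hneg
  exact Bool.noConfusion (hpos.symm.trans hneg)

def assignmentsOn (L : List ℕ) : List (ℕ → Bool) :=
  L.sublists.map fun s n => decide (n ∈ s)

theorem exists_mem_assignmentsOn (L : List ℕ) (v : ℕ → Bool) :
    ∃ w ∈ assignmentsOn L, ∀ n ∈ L, w n = v n :=
  ⟨fun n => decide (n ∈ L.filter (v ·)),
    List.mem_map.mpr ⟨_, List.mem_sublists.mpr List.filter_sublist, rfl⟩,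
    fun n hn => by simp [List.mem_filter, hn]⟩

namespace BForm

/-- The variable `0` is added so that every minterm is a nonempty conjunction. -/
def support (a : BForm) : List ℕ := 0 :: a.vars

def minterm (a : BForm) (w : ℕ → Bool) : BForm :=
  conjLits (0, w 0) (a.vars.map fun n => (n, w n))

def models (a : BForm) : List (ℕ → Bool) :=
  (assignmentsOn a.support).filter (a.eval ·)

def dnf (a : BForm) : BForm := disjForms (a.models.map a.minterm)

theorem eval_minterm (a : BForm) (w v : ℕ → Bool) :
    (a.minterm w).eval v = true ↔ ∀ n ∈ a.support, v n = w n := by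
  simp [minterm, support, eval_conjLits]

theorem eval_eq_of_eval_minterm {a : BForm} {w v : ℕ → Bool} (h : (a.minterm w).eval v = true) :
    a.eval v = a.eval w :=
  a.eval_congr fun n hn => (a.eval_minterm w v).mp h n (List.mem_cons_of_mem _ hn)

theorem exists_mem_models {a : BForm} {v : ℕ → Bool} (hv : a.eval v = true) :
    ∃ w ∈ a.models, (a.minterm w).eval v = true := by
  obtain ⟨w, hw, hagree⟩ := exists_mem_assignmentsOn a.support v
  have hvw : (a.minterm w).eval v = true :=
    (a.eval_minterm w v).mpr fun n hn => (hagree n hn).symm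
  refine ⟨w, List.mem_filter.mpr ⟨hw, ?_⟩, hvw⟩
  rwa [← eval_eq_of_eval_minterm hvw]

theorem minterm_imp_taut {a : BForm} {w : ℕ → Bool} (hw : w ∈ a.models) :
    ((a.minterm w).imp a).Taut :=
  imp_taut_of_forall fun _ hv => by
    rw [eval_eq_of_eval_minterm hv]
    simpa using (List.mem_filter.mp hw).2

theorem imp_dnf_taut (a : BForm) : (a.imp a.dnf).Taut :=
  imp_taut_of_forall fun _ hv => by
    obtain ⟨w, hw, hvw⟩ := exists_mem_models hv
    exact (eval_disjForms _ _).mpr ⟨_, List.mem_map_of_mem hw, hvw⟩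

theorem dnf_imp_taut (a : BForm) : (a.dnf.imp a).Taut :=
  imp_taut_of_forall fun v hv => by
    obtain ⟨_, hm, hmv⟩ := (eval_disjForms _ _).mp hv
    obtain ⟨w, hw, rfl⟩ := List.mem_map.mp hm
    simpa [imp, eval, hmv] using minterm_imp_taut hw v

theorem isBasic_minterm_dnf (a b : BForm) (w : ℕ → Bool) (d : NNReal) :
    IsBasic ⟨a.minterm w, d, b.dnf⟩ := by
  refine ⟨(0, w 0), _, b.models.map fun w' => ((0, w' 0), b.vars.map fun n => (n, w' n)),
    consistentList_map_graph w a.support, ?_, rfl, by simp only [dnf, List.map_map]; rfl⟩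
  simp only [List.mem_map]
  rintro _ ⟨w', -, rfl⟩
  exact consistentList_map_graph w' b.support

end BForm

namespace Derives

variable {S : Set GradedImp}

theorem trans_theory {S' : Set GradedImp} (hS : ∀ Ψ ∈ S', Derives S Ψ) {Φ : GradedImp}
    (h : Derives S' Φ) : Derives S Φ := by
  induction h with
  | ax h => exact hS _ h
  | r1 α β h => exact .r1 α β h
  | r2 γ _ ih => exact .r2 γ ih
  | r3 d hcd _ ih => exact .r3 d hcd ih
  | r4 _ ih => exact .r4 ih
  | r5 _ _ ih₁ ih₂ => exact .r5 ih₁ ih₂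
  | r6 _ _ ih₁ ih₂ => exact .r6 ih₁ ih₂

theorem of_taut_of_taut {α α' β' β : BForm} {d : NNReal} (hα : (α.imp α').Taut)
    (h : Derives S ⟨α', d, β'⟩) (hβ : (β'.imp β).Taut) : Derives S ⟨α, d, β⟩ := by
  simpa using ((r1 _ _ hα).r6 h).r6 (r1 _ _ hβ)

theorem disjForms_left {γ : BForm} {d : NNReal} :
    ∀ xs : List BForm, (∀ a ∈ xs, Derives S ⟨a, d, γ⟩) → Derives S ⟨disjForms xs, d, γ⟩
  | [], _ => r3 d zero_le (r1 _ _ (BForm.imp_taut_of_forall fun _ h => Bool.noConfusion h))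
  | [x], h => h x (List.mem_singleton_self x)
  | x :: y :: ys, h =>
    r5 (h x List.mem_cons_self) (disjForms_left (y :: ys) fun a ha => h a (.tail _ ha))

end Derives

def basicTheory (T : Set GradedImp) : Set GradedImp :=
  {Ψ | ∃ α d β, GradedImp.mk α d β ∈ T ∧ ∃ w ∈ α.models, Ψ = ⟨α.minterm w, d, β.dnf⟩}

theorem isBasic_of_mem_basicTheory {T : Set GradedImp} {Ψ : GradedImp} (h : Ψ ∈ basicTheory T) :
    IsBasic Ψ := by
  obtain ⟨α, d, β, -, w, -, rfl⟩ := h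
  exact α.isBasic_minterm_dnf β w d

theorem derives_of_mem_basicTheory {T : Set GradedImp} {Ψ : GradedImp}
    (h : Ψ ∈ basicTheory T) : Derives T Ψ := by
  obtain ⟨α, d, β, hT, w, hw, rfl⟩ := h
  exact .of_taut_of_taut (BForm.minterm_imp_taut hw) (.ax hT) β.imp_dnf_taut

theorem derives_basicTheory_of_mem {T : Set GradedImp} {Φ : GradedImp} (h : Φ ∈ T) :
    Derives (basicTheory T) Φ := by
  obtain ⟨α, d, β⟩ := Φ
  refine .of_taut_of_taut α.imp_dnf_taut (.disjForms_left _ fun m hm => ?_) β.dnf_imp_taut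
  obtain ⟨w, hw, rfl⟩ := List.mem_map.mp hm
  exact .ax ⟨α, d, β, h, w, hw, rfl⟩

theorem exists_basic_theory (T : Set GradedImp) :
    ∃ Tb : Set GradedImp, (∀ Φ ∈ Tb, IsBasic Φ) ∧
      ∀ Φ : GradedImp, Derives T Φ ↔ Derives Tb Φ :=
  ⟨basicTheory T, fun _ => isBasic_of_mem_basicTheory, fun _ =>
    ⟨.trans_theory fun _ => derives_basicTheory_of_mem,
      .trans_theory fun _ => derives_of_mem_basicTheory⟩⟩
end

section
/- Let T be a finite theory and let ζ, η be Boolean formulas such that T ⊢ ζ ⟹_s η in LAE for some s ∈ ℝ⁺. Then there is an r ∈ ℝ⁺ such that: (i) T ⊢ ζ ⟹_r η, and for every t ∈ ℝ⁺ with T ⊢ ζ ⟹_t η one has r ≤ t; and (ii) r is a finite sum (possibly empty, i.e., 0, and possibly with repetitions) of degrees of graded implications contained in T. -/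
/-!
Every derivation can be rebuilt so that its degree drops to a sum of degrees of axioms of `T`:
only axioms introduce positive degrees, (R6) adds degrees, (R3) can be skipped, and (R5) can be
fed the larger of its two reduced premises. For finite `T` these sums form a well-ordered subset
of `ℝ⁺` (the additive monoid generated by finitely many nonnegative reals), so among them there is
a least degree at which `ζ ⟹ η` is derivable, and it undercuts every other derivable degree.
-/

open Set

abbrev degreeMonoid (T : Set GradedImp) : AddSubmonoid NNReal :=
  AddSubmonoid.closure (GradedImp.deg '' T)

lemma isWF_degreeMonoid {T : Set GradedImp} (hT : T.Finite) :
    (degreeMonoid T : Set NNReal).IsWF :=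
  ((hT.image _).isPWO.addSubmonoid_closure fun _ _ => zero_le).isWF

lemma Derives.exists_le_mem_degreeMonoid {T : Set GradedImp} {Φ : GradedImp}
    (h : Derives T Φ) :
    ∃ c ≤ Φ.deg, c ∈ degreeMonoid T ∧ Derives T ⟨Φ.lhs, c, Φ.rhs⟩ := by
  induction h with
  | @ax Φ hΦ =>
    exact ⟨Φ.deg, le_rfl, AddSubmonoid.subset_closure (mem_image_of_mem _ hΦ), .ax hΦ⟩
  | r1 α β ht => exact ⟨0, le_rfl, zero_mem _, .r1 α β ht⟩
  | r2 γ h _ => exact ⟨0, le_rfl, zero_mem _, .r2 γ h⟩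
  | r3 d hcd _ ih =>
    obtain ⟨c', hc', hmem, hder⟩ := ih
    exact ⟨c', hc'.trans hcd, hmem, hder⟩
  | r4 h _ => exact ⟨0, le_rfl, zero_mem _, .r4 h⟩
  | r5 _ _ ih₁ ih₂ =>
    obtain ⟨c₁, hc₁, hmem₁, hder₁⟩ := ih₁
    obtain ⟨c₂, hc₂, hmem₂, hder₂⟩ := ih₂
    rcases le_total c₁ c₂ with hle | hle
    · exact ⟨c₂, hc₂, hmem₂, .r5 (.r3 _ hle hder₁) hder₂⟩
    · exact ⟨c₁, hc₁, hmem₁, .r5 hder₁ (.r3 _ hle hder₂)⟩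
  | r6 _ _ ih₁ ih₂ =>
    obtain ⟨c₁, hc₁, hmem₁, hder₁⟩ := ih₁
    obtain ⟨c₂, hc₂, hmem₂, hder₂⟩ := ih₂
    exact ⟨c₁ + c₂, add_le_add hc₁ hc₂, add_mem hmem₁ hmem₂, .r6 hder₁ hder₂⟩

theorem exists_smallest_degree (T : Set GradedImp) (hT : T.Finite)
    (ζ η : BForm) (s : NNReal) (h : Derives T ⟨ζ, s, η⟩) :
    ∃ r : NNReal,
      Derives T ⟨ζ, r, η⟩ ∧
      (∀ t : NNReal, Derives T ⟨ζ, t, η⟩ → r ≤ t) ∧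
      (∃ l : List NNReal, (∀ x ∈ l, ∃ Φ ∈ T, Φ.deg = x) ∧ r = l.sum) := by
  set W : Set NNReal := {t | t ∈ degreeMonoid T ∧ Derives T ⟨ζ, t, η⟩}
  have hW : W.IsWF := (isWF_degreeMonoid hT).mono fun _ ht => ht.1
  have hne : W.Nonempty := by
    obtain ⟨c, -, hc⟩ := h.exists_le_mem_degreeMonoid
    exact ⟨c, hc⟩
  obtain ⟨hmem, hder⟩ : hW.min hne ∈ W := hW.min_mem hne
  obtain ⟨l, hl, hsum⟩ := AddSubmonoid.exists_list_of_mem_closure hmem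
  refine ⟨hW.min hne, hder, fun t ht => ?_, l, hl, hsum.symm⟩
  obtain ⟨c, hct, hc⟩ := ht.exists_le_mem_degreeMonoid
  exact (hW.min_le hne hc).trans hct
end
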